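/- arXiv:2212.01573 — 2 statements merged into one kernel-verified Lean document; each statement's English description precedes it below -/
import Mathlib

section
/- Let δ be the linear map on the free vector space over labeled graphs defined by δ(Γ) = Σ_{e ∈ E(Γ){non-loops}} σ(e)·Γ/e, where for an oriented edge e = (p,q) between vertices labeled p and q, σ(e) = (−1)^q if p < q and σ(e) = (−1)^{p+1} if p > q, and contraction relabels vertices by assigning min{p,q} to the merged vertex and decreasing by one all labels greater than max{p,q}. Then δ ∘ δ = 0. -/
/-- A labeled graph: vertices are labeled by `Fin m` (representing labels `1, …, m`),
oriented edges are indexed by a finite set of natural numbers, with an endpoint map. -/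
structure LGraph (m : ℕ) where
  E : Finset ℕ
  ends : ℕ → Fin m × Fin m

/-- The relabeling map after contracting an edge with endpoint labels `mn < M`:
the merged vertex receives the label `mn` and every label greater than `M` decreases
by one (labels below `M` are unchanged). -/
def collapseMap {m : ℕ} (M mn : Fin (m + 2)) (v : Fin (m + 2)) : Fin (m + 1) :=
  if h : (v : ℕ) < (M : ℕ) then ⟨v, by have := M.isLt; omega⟩
  else if (v : ℕ) = (M : ℕ) then ⟨min (mn : ℕ) m, by have := Nat.min_le_right (mn : ℕ) m; omega⟩
  else ⟨(v : ℕ) - 1, by have := v.isLt; omega⟩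

/-- Contraction `Γ/e`: delete the edge `e` and merge its endpoints, relabeling vertices
so that the merged vertex gets label `min{p,q}` and labels above `max{p,q}` drop by one. -/
def contract {m : ℕ} (Γ : LGraph (m + 2)) (e : ℕ) : LGraph (m + 1) where
  E := Γ.E.erase e
  ends := fun f =>
    (collapseMap (max (Γ.ends e).1 (Γ.ends e).2) (min (Γ.ends e).1 (Γ.ends e).2) (Γ.ends f).1,
     collapseMap (max (Γ.ends e).1 (Γ.ends e).2) (min (Γ.ends e).1 (Γ.ends e).2) (Γ.ends f).2)

/-- The sign `σ(e)` of an oriented edge `e = (p, q)` (`p, q` being the 1-based labels,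
i.e. `p = pq.1 + 1`, `q = pq.2 + 1`): `σ(e) = (−1)^q` if `p < q` and `(−1)^{p+1}` if `p > q`. -/
def edgeSign {k : ℕ} (pq : Fin k × Fin k) : ℤ :=
  if pq.1 < pq.2 then (-1) ^ ((pq.2 : ℕ) + 1) else (-1) ^ (((pq.1 : ℕ) + 1) + 1)

open Classical in
/-- `δ(Γ) = Σ_{e ∈ E(Γ), e not a loop} σ(e) · Γ/e`, on a single graph. -/
noncomputable def deltaSingle {m : ℕ} (Γ : LGraph (m + 2)) : LGraph (m + 1) →₀ ℝ :=
  ∑ e ∈ Γ.E.filter (fun e => (Γ.ends e).1 ≠ (Γ.ends e).2),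
    (edgeSign (Γ.ends e) : ℝ) • Finsupp.single (contract Γ e) 1

/-- The coboundary map `δ`, extended linearly to the free vector space on labeled graphs. -/
noncomputable def delta (m : ℕ) :
    (LGraph (m + 2) →₀ ℝ) →ₗ[ℝ] (LGraph (m + 1) →₀ ℝ) :=
  Finsupp.lsum ℝ fun Γ => LinearMap.toSpanSingleton ℝ _ (deltaSingle Γ)

/-!
Expanding `δ(δΓ)` gives a sum over ordered pairs `(e, f)` of non-loop edges of `Γ` that do not
join the same two vertices. Contracting such a pair in either order yields the same graph, while
the sign products `σ(e) σ_{Γ/e}(f)` and `σ(f) σ_{Γ/f}(e)` are opposite, by a parity count on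
the labels involved. Exchanging `e` and `f` therefore shows `δ(δΓ) = -δ(δΓ)`.
-/

/-- The map `collapseMap` on underlying natural numbers; its clamp `min mn m` is inert when
`mn < M`. -/
def collapse (M mn w : ℕ) : ℕ := if w < M then w else if w = M then mn else w - 1

lemma collapse_cases (M mn w : ℕ) :
    (w < M ∧ collapse M mn w = w) ∨ (w = M ∧ collapse M mn w = mn) ∨
      (M < w ∧ collapse M mn w = w - 1) := by
  unfold collapse; split_ifs <;> omega

def collapseAlong (x y : ℕ) : ℕ → ℕ := collapse (max x y) (min x y)

def edgeSignExp (x y : ℕ) : ℕ := max x y + if x < y then 1 else 0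

lemma edgeSignExp_cases (x y : ℕ) :
    (x < y ∧ edgeSignExp x y = y + 1) ∨ (y ≤ x ∧ edgeSignExp x y = x) := by
  unfold edgeSignExp; split_ifs <;> omega

lemma collapseAlong_ne_collapseAlong_iff {x y : ℕ} (hxy : x ≠ y) (u v : ℕ) :
    collapseAlong x y u ≠ collapseAlong x y v ↔ u ≠ v ∧ s(x, y) ≠ s(u, v) := by
  have hu := collapse_cases (max x y) (min x y) u
  have hv := collapse_cases (max x y) (min x y) v
  simp only [collapseAlong, Ne, Sym2.eq_iff]
  omega

lemma odd_edgeSignExp_add {x y u v : ℕ} (hxy : x ≠ y) (huv : u ≠ v) (hne : s(x, y) ≠ s(u, v)) :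
    Odd (edgeSignExp x y + edgeSignExp (collapseAlong x y u) (collapseAlong x y v) +
      (edgeSignExp u v + edgeSignExp (collapseAlong u v x) (collapseAlong u v y))) := by
  rw [Ne, Sym2.eq_iff] at hne
  unfold collapseAlong
  have h1 := collapse_cases (max u v) (min u v) x
  have h2 := collapse_cases (max u v) (min u v) y
  have h3 := collapse_cases (max x y) (min x y) u
  have h4 := collapse_cases (max x y) (min x y) v
  have e1 := edgeSignExp_cases x y
  have e2 := edgeSignExp_cases u v
  have e3 := edgeSignExp_cases (collapse (max x y) (min x y) u) (collapse (max x y) (min x y) v)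
  have e4 := edgeSignExp_cases (collapse (max u v) (min u v) x) (collapse (max u v) (min u v) y)
  rw [Nat.odd_iff]
  omega

set_option maxHeartbeats 1000000 in
lemma collapse_collapse_comm {X N U V : ℕ} (hNX : N < X) (hVU : V < U) (w : ℕ) :
    collapse (max (collapse X N U) (collapse X N V)) (min (collapse X N U) (collapse X N V))
      (collapse X N w) =
    collapse (max (collapse U V X) (collapse U V N)) (min (collapse U V X) (collapse U V N))
      (collapse U V w) := by
  have h1 := collapse_cases U V X
  have h2 := collapse_cases U V N
  have h3 := collapse_cases X N U
  have h4 := collapse_cases X N V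
  have h5 := collapse_cases X N w
  have h6 := collapse_cases U V w
  have h7 := collapse_cases (max (collapse X N U) (collapse X N V))
    (min (collapse X N U) (collapse X N V)) (collapse X N w)
  have h8 := collapse_cases (max (collapse U V X) (collapse U V N))
    (min (collapse U V X) (collapse U V N)) (collapse U V w)
  omega

lemma max_min_apply_max_min (F : ℕ → ℕ) (u v : ℕ) :
    max (F (max u v)) (F (min u v)) = max (F u) (F v) ∧
      min (F (max u v)) (F (min u v)) = min (F u) (F v) := by
  rcases le_total u v with h | h
  · rw [max_eq_right h, min_eq_left h, max_comm, min_comm]; exact ⟨rfl, rfl⟩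
  · rw [max_eq_left h, min_eq_right h]; exact ⟨rfl, rfl⟩

lemma collapseAlong_collapseAlong_comm {x y u v : ℕ} (hxy : x ≠ y) (huv : u ≠ v) (w : ℕ) :
    collapseAlong (collapseAlong x y u) (collapseAlong x y v) (collapseAlong x y w) =
      collapseAlong (collapseAlong u v x) (collapseAlong u v y) (collapseAlong u v w) := by
  have h := collapse_collapse_comm (X := max x y) (N := min x y) (U := max u v) (V := min u v)
    (by omega) (by omega) w
  obtain ⟨hmax, hmin⟩ := max_min_apply_max_min (collapseAlong x y) u v
  obtain ⟨hmax', hmin'⟩ := max_min_apply_max_min (collapseAlong u v) x y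
  unfold collapseAlong at *
  rwa [hmax, hmin, hmax', hmin'] at h

lemma neg_one_pow_eq_neg_of_odd_add {R : Type*} [Monoid R] [HasDistribNeg R] {a b : ℕ}
    (h : Odd (a + b)) : (-1 : R) ^ a = -(-1) ^ b := by
  rcases Nat.even_or_odd b with hb | hb
  · simp [(Nat.odd_add.mp h).mpr hb |>.neg_one_pow, hb.neg_one_pow]
  · simp [(Nat.odd_add'.mp h).mp hb |>.neg_one_pow, hb.neg_one_pow]

lemma val_collapseMap_max_min {m : ℕ} {a b : Fin (m + 2)} (hab : a ≠ b) (v : Fin (m + 2)) :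
    (collapseMap (max a b) (min a b) v : ℕ) = collapseAlong a b v := by
  have hm : (min a b : ℕ) ≤ m := by omega
  unfold collapseMap collapseAlong collapse
  simp only [Fin.coe_max, Fin.coe_min] at *
  split_ifs <;> simp only [Nat.min_eq_left hm]

lemma edgeSign_eq_neg_one_pow {k : ℕ} (pq : Fin k × Fin k) :
    edgeSign pq = (-1) ^ edgeSignExp pq.1 pq.2 := by
  unfold edgeSign edgeSignExp
  rcases lt_or_ge pq.1 pq.2 with h | h
  · rw [if_pos h, if_pos (show (pq.1 : ℕ) < pq.2 from h),
      max_eq_right (show (pq.1 : ℕ) ≤ pq.2 from h.le)]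
  · rw [if_neg h.not_gt, if_neg (show ¬(pq.1 : ℕ) < pq.2 by omega),
      max_eq_left (show (pq.2 : ℕ) ≤ pq.1 from h), pow_succ, pow_succ]
    ring

namespace LGraph

variable {k m : ℕ}

lemma ext {Γ Δ : LGraph k} (hE : Γ.E = Δ.E) (hends : ∀ f, Γ.ends f = Δ.ends f) : Γ = Δ := by
  cases Γ; cases Δ
  congr
  exact funext hends

def link (Γ : LGraph k) (e : ℕ) : Sym2 (Fin k) := s((Γ.ends e).1, (Γ.ends e).2)

def nonloops (Γ : LGraph k) : Finset ℕ := Γ.E.filter fun e => (Γ.ends e).1 ≠ (Γ.ends e).2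

lemma link_eq_link_iff (Γ : LGraph k) (e f : ℕ) :
    Γ.link e = Γ.link f ↔
      s(((Γ.ends e).1 : ℕ), (Γ.ends e).2) = s(((Γ.ends f).1 : ℕ), (Γ.ends f).2) := by
  simp only [link, Sym2.eq_iff, Fin.val_inj]

lemma val_contract_ends_fst {Γ : LGraph (m + 2)} {e : ℕ} (he : (Γ.ends e).1 ≠ (Γ.ends e).2)
    (f : ℕ) : (((contract Γ e).ends f).1 : ℕ) =
      collapseAlong (Γ.ends e).1 (Γ.ends e).2 (Γ.ends f).1 :=
  val_collapseMap_max_min he _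

lemma val_contract_ends_snd {Γ : LGraph (m + 2)} {e : ℕ} (he : (Γ.ends e).1 ≠ (Γ.ends e).2)
    (f : ℕ) : (((contract Γ e).ends f).2 : ℕ) =
      collapseAlong (Γ.ends e).1 (Γ.ends e).2 (Γ.ends f).2 :=
  val_collapseMap_max_min he _

lemma contract_ends_ne_iff {Γ : LGraph (m + 2)} {e : ℕ} (he : (Γ.ends e).1 ≠ (Γ.ends e).2)
    (f : ℕ) : ((contract Γ e).ends f).1 ≠ ((contract Γ e).ends f).2 ↔
      (Γ.ends f).1 ≠ (Γ.ends f).2 ∧ Γ.link e ≠ Γ.link f := by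
  rw [← Fin.val_ne_iff, val_contract_ends_fst he, val_contract_ends_snd he,
    collapseAlong_ne_collapseAlong_iff (Fin.val_ne_iff.mpr he)]
  simp only [Ne, link_eq_link_iff, Fin.val_inj]

lemma contract_E (Γ : LGraph (m + 2)) (e : ℕ) : (contract Γ e).E = Γ.E.erase e := rfl

lemma nonloops_contract {Γ : LGraph (m + 2)} {e : ℕ} (he : (Γ.ends e).1 ≠ (Γ.ends e).2) :
    (contract Γ e).nonloops = Γ.nonloops.filter fun f => Γ.link e ≠ Γ.link f := by
  ext f
  simp only [nonloops, Finset.mem_filter, contract_ends_ne_iff he, contract_E, Finset.mem_erase]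
  constructor
  · rintro ⟨⟨-, hf⟩, hloop, hlink⟩
    exact ⟨⟨hf, hloop⟩, hlink⟩
  · rintro ⟨⟨hf, hloop⟩, hlink⟩
    exact ⟨⟨by rintro rfl; exact hlink rfl, hf⟩, hloop, hlink⟩

lemma contract_contract_comm {Γ : LGraph (m + 3)} {e f : ℕ} (he : (Γ.ends e).1 ≠ (Γ.ends e).2)
    (hf : (Γ.ends f).1 ≠ (Γ.ends f).2) (hlink : Γ.link e ≠ Γ.link f) :
    contract (contract Γ e) f = contract (contract Γ f) e := by
  have hef := (contract_ends_ne_iff he f).mpr ⟨hf, hlink⟩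
  have hfe := (contract_ends_ne_iff hf e).mpr ⟨he, hlink.symm⟩
  refine ext Finset.erase_right_comm fun g => Prod.ext (Fin.ext ?_) (Fin.ext ?_)
  · rw [val_contract_ends_fst hef, val_contract_ends_fst hfe, val_contract_ends_fst he,
      val_contract_ends_snd he, val_contract_ends_fst hf, val_contract_ends_snd hf,
      val_contract_ends_fst he, val_contract_ends_fst hf]
    exact collapseAlong_collapseAlong_comm (Fin.val_ne_iff.mpr he) (Fin.val_ne_iff.mpr hf) _
  · rw [val_contract_ends_snd hef, val_contract_ends_snd hfe, val_contract_ends_fst he,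
      val_contract_ends_snd he, val_contract_ends_fst hf, val_contract_ends_snd hf,
      val_contract_ends_snd he, val_contract_ends_snd hf]
    exact collapseAlong_collapseAlong_comm (Fin.val_ne_iff.mpr he) (Fin.val_ne_iff.mpr hf) _

lemma edgeSign_mul_edgeSign_contract {Γ : LGraph (m + 3)} {e f : ℕ}
    (he : (Γ.ends e).1 ≠ (Γ.ends e).2) (hf : (Γ.ends f).1 ≠ (Γ.ends f).2)
    (hlink : Γ.link e ≠ Γ.link f) :
    edgeSign (Γ.ends f) * edgeSign ((contract Γ f).ends e) =
      -(edgeSign (Γ.ends e) * edgeSign ((contract Γ e).ends f)) := by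
  simp only [edgeSign_eq_neg_one_pow, ← pow_add, val_contract_ends_fst he,
    val_contract_ends_snd he, val_contract_ends_fst hf, val_contract_ends_snd hf]
  refine neg_one_pow_eq_neg_of_odd_add ?_
  rw [add_comm]
  exact odd_edgeSignExp_add (Fin.val_ne_iff.mpr he) (Fin.val_ne_iff.mpr hf)
    ((link_eq_link_iff Γ e f).not.mp hlink)

end LGraph

section Coboundary

variable {m : ℕ}

open LGraph

lemma deltaSingle_eq_sum_nonloops (Γ : LGraph (m + 2)) :
    deltaSingle Γ = ∑ e ∈ Γ.nonloops, (edgeSign (Γ.ends e) : ℝ) • Finsupp.single (contract Γ e) 1 :=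
  rfl

lemma delta_single (Γ : LGraph (m + 2)) (r : ℝ) :
    delta m (Finsupp.single Γ r) = r • deltaSingle Γ := by
  rw [delta, Finsupp.lsum_single, LinearMap.toSpanSingleton_apply]

/-- A non-loop `f` joining the same two vertices as `e` becomes a loop in `Γ/e`, so the pair
`(e, f)` does not occur in `δ(δΓ)`. -/
noncomputable def doubleContractionTerm (Γ : LGraph (m + 3)) (e f : ℕ) : LGraph (m + 1) →₀ ℝ :=
  if Γ.link e ≠ Γ.link f then
    ((edgeSign (Γ.ends e) * edgeSign ((contract Γ e).ends f) : ℤ) : ℝ) •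
      Finsupp.single (contract (contract Γ e) f) 1
  else 0

lemma doubleContractionTerm_swap {Γ : LGraph (m + 3)} {e f : ℕ}
    (he : (Γ.ends e).1 ≠ (Γ.ends e).2) (hf : (Γ.ends f).1 ≠ (Γ.ends f).2) :
    doubleContractionTerm Γ f e = -doubleContractionTerm Γ e f := by
  unfold doubleContractionTerm
  by_cases hlink : Γ.link e = Γ.link f
  · simp [hlink]
  · rw [if_pos (Ne.symm hlink), if_pos hlink, edgeSign_mul_edgeSign_contract he hf hlink,
      contract_contract_comm hf he (Ne.symm hlink), Int.cast_neg, neg_smul]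

lemma delta_deltaSingle_eq_sum (Γ : LGraph (m + 3)) :
    delta m (deltaSingle Γ) =
      ∑ e ∈ Γ.nonloops, ∑ f ∈ Γ.nonloops, doubleContractionTerm Γ e f := by
  rw [deltaSingle_eq_sum_nonloops, map_sum]
  refine Finset.sum_congr rfl fun e he => ?_
  have he' := (Finset.mem_filter.mp he).2
  rw [map_smul, delta_single, one_smul, deltaSingle_eq_sum_nonloops, nonloops_contract he',
    Finset.sum_filter, Finset.smul_sum]
  refine Finset.sum_congr rfl fun f _ => ?_
  unfold doubleContractionTerm
  split_ifs
  · rw [Int.cast_mul, mul_smul]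
  · exact smul_zero _

lemma delta_deltaSingle (Γ : LGraph (m + 3)) : delta m (deltaSingle Γ) = 0 := by
  rw [delta_deltaSingle_eq_sum, ← self_eq_neg]
  calc ∑ e ∈ Γ.nonloops, ∑ f ∈ Γ.nonloops, doubleContractionTerm Γ e f
      = ∑ e ∈ Γ.nonloops, ∑ f ∈ Γ.nonloops, doubleContractionTerm Γ f e := Finset.sum_comm
    _ = -∑ e ∈ Γ.nonloops, ∑ f ∈ Γ.nonloops, doubleContractionTerm Γ e f := by
      simp only [← Finset.sum_neg_distrib]
      refine Finset.sum_congr rfl fun e he => Finset.sum_congr rfl fun f hf => ?_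
      exact doubleContractionTerm_swap (Finset.mem_filter.mp he).2 (Finset.mem_filter.mp hf).2

end Coboundary

/-- the coboundary map satisfies `δ ∘ δ = 0`. -/
theorem stmt_5 (m : ℕ) (x : LGraph (m + 3) →₀ ℝ) :
    delta m (delta (m + 1) x) = 0 := by
  have hcomp : (delta m).comp (delta (m + 1)) = 0 :=
    Finsupp.lhom_ext fun Γ r => by
      rw [LinearMap.comp_apply, delta_single, map_smul, delta_deltaSingle, smul_zero,
        LinearMap.zero_apply]
  exact LinearMap.congr_fun hcomp x
end

section
/- Reversing the order of two commuting edge contractions changes the sign: if e and e' are disjoint contractible non-loop edges of a labeled graph Γ with labels as in the BCR graph complex, then σ(e)·σ'(e')·(Γ/e)/e' = −σ(e')·σ''(e)·(Γ/e')/e as labeled graphs, where σ', σ'' are the signs of the images of e', e after the first contraction under the relabeling convention (merged vertex gets min of the two labels, labels above the max shift down by one). -/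
/-! Auxiliary material -/

/-- Numeric version of `collapseMap`. -/
def cm (M mn v m : ℕ) : ℕ := if v < M then v else if v = M then min mn m else v - 1

lemma cm_coe {m : ℕ} (M mn v : Fin (m + 2)) :
    ((collapseMap M mn v : Fin (m + 1)) : ℕ) = cm (M : ℕ) (mn : ℕ) (v : ℕ) m := by
  simp only [collapseMap, cm]
  split_ifs <;> rfl

lemma fin_coe_max {k : ℕ} (a b : Fin k) : ((max a b : Fin k) : ℕ) = max (a : ℕ) (b : ℕ) := rfl
lemma fin_coe_min {k : ℕ} (a b : Fin k) : ((min a b : Fin k) : ℕ) = min (a : ℕ) (b : ℕ) := rfl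

lemma pow_neg_parity (s t : ℕ) (h : s % 2 ≠ t % 2) : (-1 : ℤ) ^ s = -(-1) ^ t := by
  rcases Nat.even_or_odd s with hs | hs
  · have ht : Odd t := Nat.odd_iff.mpr (by have := Nat.even_iff.mp hs; omega)
    rw [hs.neg_one_pow, ht.neg_one_pow] <;> try ring
  · have ht : Even t := Nat.even_iff.mpr (by have := Nat.odd_iff.mp hs; omega)
    rw [hs.neg_one_pow, ht.neg_one_pow] <;> try ring

/-- The common value of the double collapse. -/
def dc (a b c d v : ℕ) : ℕ :=
  if v = a ∨ v = b then min a b - (if max c d < min a b then 1 else 0)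
  else if v = c ∨ v = d then min c d - (if max a b < min c d then 1 else 0)
  else v - (if max a b < v then 1 else 0) - (if max c d < v then 1 else 0)

lemma cm_ne (M mn v m : ℕ) (h : v ≠ M) :
    cm M mn v m = v - (if M < v then 1 else 0) := by
  simp only [cm]; split_ifs <;> omega

lemma cm_mem (a b v m : ℕ) (h : v = a ∨ v = b) (hm : min a b ≤ m) (hab : a ≠ b) :
    cm (max a b) (min a b) v m = min a b := by
  simp only [cm]; split_ifs <;> omega

set_option maxHeartbeats 1600000 in
lemma side (m a b c d v : ℕ) (ha : a < m + 3) (hb : b < m + 3) (hc : c < m + 3)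
    (hd : d < m + 3) (hv : v < m + 3) (hab : a ≠ b) (hcd : c ≠ d)
    (h1 : a ≠ c) (h2 : a ≠ d) (h3 : b ≠ c) (h4 : b ≠ d) :
    cm (max (cm (max a b) (min a b) c (m + 1)) (cm (max a b) (min a b) d (m + 1)))
       (min (cm (max a b) (min a b) c (m + 1)) (cm (max a b) (min a b) d (m + 1)))
       (cm (max a b) (min a b) v (m + 1)) m
  = dc a b c d v := by
  rw [cm_ne (max a b) (min a b) c (m + 1) (by omega),
      cm_ne (max a b) (min a b) d (m + 1) (by omega)]
  by_cases hva : v = a ∨ v = b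
  · rw [cm_mem a b v (m + 1) hva (by omega) hab,
        cm_ne _ _ _ _ (by split_ifs <;> omega)]
    simp only [dc, if_pos hva]
    split_ifs <;> first | omega | (exfalso; tauto)
  · push_neg at hva
    obtain ⟨hva1, hva2⟩ := hva
    rw [cm_ne (max a b) (min a b) v (m + 1) (by omega)]
    by_cases hvc : v = c
    · subst hvc
      rw [cm_mem _ _ _ m (Or.inl rfl) (by split_ifs <;> omega) (by split_ifs <;> omega)]
      simp only [dc]
      split_ifs <;> first | omega | (exfalso; tauto)
    · by_cases hvd : v = d
      · subst hvd
        rw [cm_mem _ _ _ m (Or.inr rfl) (by split_ifs <;> omega) (by split_ifs <;> omega)]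
        simp only [dc]
        split_ifs <;> first | omega | (exfalso; tauto)
      · rw [cm_ne _ _ _ _ (by split_ifs <;> omega)]
        simp only [dc]
        split_ifs <;> first | omega | (exfalso; tauto)

set_option maxHeartbeats 800000 in
lemma dc_symm (a b c d v : ℕ) (hab : a ≠ b) (hcd : c ≠ d)
    (h1 : a ≠ c) (h2 : a ≠ d) (h3 : b ≠ c) (h4 : b ≠ d) :
    dc a b c d v = dc c d a b v := by
  simp only [dc]
  split_ifs <;> omega

lemma cm_comm (m a b c d v : ℕ) (ha : a < m + 3) (hb : b < m + 3) (hc : c < m + 3)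
    (hd : d < m + 3) (hv : v < m + 3) (hab : a ≠ b) (hcd : c ≠ d)
    (h1 : a ≠ c) (h2 : a ≠ d) (h3 : b ≠ c) (h4 : b ≠ d) :
    cm (max (cm (max a b) (min a b) c (m + 1)) (cm (max a b) (min a b) d (m + 1)))
       (min (cm (max a b) (min a b) c (m + 1)) (cm (max a b) (min a b) d (m + 1)))
       (cm (max a b) (min a b) v (m + 1)) m
  = cm (max (cm (max c d) (min c d) a (m + 1)) (cm (max c d) (min c d) b (m + 1)))
       (min (cm (max c d) (min c d) a (m + 1)) (cm (max c d) (min c d) b (m + 1)))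
       (cm (max c d) (min c d) v (m + 1)) m := by
  rw [side m a b c d v ha hb hc hd hv hab hcd h1 h2 h3 h4,
      side m c d a b v hc hd ha hb hv hcd hab h1.symm h3.symm h2.symm h4.symm,
      dc_symm a b c d v hab hcd h1 h2 h3 h4]



set_option maxHeartbeats 800000 in
lemma sign_key (A B C D : ℕ) (hab : A ≠ B) (hcd : C ≠ D)
    (h1 : A ≠ C) (h2 : A ≠ D) (h3 : B ≠ C) (h4 : B ≠ D) :
    ((if A < B then (-1 : ℤ) ^ (B + 1) else (-1) ^ (A + 1 + 1)) *
      (if C - (if max A B < C then 1 else 0) < D - (if max A B < D then 1 else 0) then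
          (-1 : ℤ) ^ ((D - (if max A B < D then 1 else 0)) + 1)
        else (-1) ^ ((C - (if max A B < C then 1 else 0)) + 1 + 1)))
    = -(((if C < D then (-1 : ℤ) ^ (D + 1) else (-1) ^ (C + 1 + 1)) *
      (if A - (if max C D < A then 1 else 0) < B - (if max C D < B then 1 else 0) then
          (-1 : ℤ) ^ ((B - (if max C D < B then 1 else 0)) + 1)
        else (-1) ^ ((A - (if max C D < A then 1 else 0)) + 1 + 1)))) := by
  have key : ∀ x y z w : ℕ, (x + y) % 2 ≠ (z + w) % 2 →
      (-1 : ℤ) ^ x * (-1 : ℤ) ^ y = -((-1 : ℤ) ^ z * (-1 : ℤ) ^ w) := by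
    intro x y z w h
    rw [← pow_add, ← pow_add]
    exact pow_neg_parity _ _ h
  rcases lt_or_gt_of_ne hab with hAB | hAB <;> rcases lt_or_gt_of_ne hcd with hCD | hCD
  · rw [if_pos hAB, if_pos hCD,
      if_pos (show C - (if max A B < C then 1 else 0) < D - (if max A B < D then 1 else 0) by
        split_ifs <;> omega),
      if_pos (show A - (if max C D < A then 1 else 0) < B - (if max C D < B then 1 else 0) by
        split_ifs <;> omega)]
    apply key
    split_ifs <;> omega
  · rw [if_pos hAB, if_neg (show ¬ C < D by omega),
      if_neg (show ¬ C - (if max A B < C then 1 else 0) < D - (if max A B < D then 1 else 0) by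
        split_ifs <;> omega),
      if_pos (show A - (if max C D < A then 1 else 0) < B - (if max C D < B then 1 else 0) by
        split_ifs <;> omega)]
    apply key
    split_ifs <;> omega
  · rw [if_neg (show ¬ A < B by omega), if_pos hCD,
      if_pos (show C - (if max A B < C then 1 else 0) < D - (if max A B < D then 1 else 0) by
        split_ifs <;> omega),
      if_neg (show ¬ A - (if max C D < A then 1 else 0) < B - (if max C D < B then 1 else 0) by
        split_ifs <;> omega)]
    apply key
    split_ifs <;> omega
  · rw [if_neg (show ¬ A < B by omega), if_neg (show ¬ C < D by omega),
      if_neg (show ¬ C - (if max A B < C then 1 else 0) < D - (if max A B < D then 1 else 0) by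
        split_ifs <;> omega),
      if_neg (show ¬ A - (if max C D < A then 1 else 0) < B - (if max C D < B then 1 else 0) by
        split_ifs <;> omega)]
    apply key
    split_ifs <;> omega

set_option maxHeartbeats 1600000 in
theorem stmt_18 (m : ℕ) (Γ : LGraph (m + 3)) (e e' : ℕ)
    (he : e ∈ Γ.E) (he' : e' ∈ Γ.E) (hne : e ≠ e')
    (hl : (Γ.ends e).1 ≠ (Γ.ends e).2) (hl' : (Γ.ends e').1 ≠ (Γ.ends e').2)
    (hd1 : (Γ.ends e).1 ≠ (Γ.ends e').1) (hd2 : (Γ.ends e).1 ≠ (Γ.ends e').2)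
    (hd3 : (Γ.ends e).2 ≠ (Γ.ends e').1) (hd4 : (Γ.ends e).2 ≠ (Γ.ends e').2) :
    contract (contract Γ e) e' = contract (contract Γ e') e ∧
    edgeSign (Γ.ends e) * edgeSign ((contract Γ e).ends e')
      = - (edgeSign (Γ.ends e') * edgeSign ((contract Γ e').ends e)) := by
  set a := (Γ.ends e).1 with ha0
  set b := (Γ.ends e).2 with hb0
  set c := (Γ.ends e').1 with hc0
  set d := (Γ.ends e').2 with hd0
  have Hab : (a : ℕ) ≠ (b : ℕ) := fun h => hl (Fin.val_injective h)
  have Hcd : (c : ℕ) ≠ (d : ℕ) := fun h => hl' (Fin.val_injective h)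
  have H1 : (a : ℕ) ≠ (c : ℕ) := fun h => hd1 (Fin.val_injective h)
  have H2 : (a : ℕ) ≠ (d : ℕ) := fun h => hd2 (Fin.val_injective h)
  have H3 : (b : ℕ) ≠ (c : ℕ) := fun h => hd3 (Fin.val_injective h)
  have H4 : (b : ℕ) ≠ (d : ℕ) := fun h => hd4 (Fin.val_injective h)
  have hA := a.isLt
  have hB := b.isLt
  have hC := c.isLt
  have hD := d.isLt
  constructor
  · have hE : (contract (contract Γ e) e').E = (contract (contract Γ e') e).E := by
      simp only [contract]
      ext x
      simp only [Finset.mem_erase]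
      tauto
    have hends : (contract (contract Γ e) e').ends = (contract (contract Γ e') e).ends := by
      funext f
      simp only [contract, Prod.mk.injEq]
      constructor <;>
      · apply Fin.ext
        simp only [cm_coe, fin_coe_max, fin_coe_min]
        exact cm_comm m a b c d _ hA hB hC hD (Fin.isLt _) Hab Hcd H1 H2 H3 H4
    have hLG : ∀ (G H : LGraph (m + 1)), G.E = H.E → G.ends = H.ends → G = H := by
      rintro ⟨E1, en1⟩ ⟨E2, en2⟩ h1 h2
      cases h1; cases h2; rfl
    exact hLG _ _ hE hends
  · simp only [contract, edgeSign, Fin.lt_def, cm_coe, fin_coe_max, fin_coe_min]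
    rw [cm_ne (max (a : ℕ) b) (min (a : ℕ) b) c (m + 1) (by omega),
        cm_ne (max (a : ℕ) b) (min (a : ℕ) b) d (m + 1) (by omega),
        cm_ne (max (c : ℕ) d) (min (c : ℕ) d) a (m + 1) (by omega),
        cm_ne (max (c : ℕ) d) (min (c : ℕ) d) b (m + 1) (by omega)]
    exact sign_key a b c d Hab Hcd H1 H2 H3 H4
end
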